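/- For all indices i, j, k the v-covariant derivative a^{ij}|^k := ∂a^{ij}/∂p_k + ∑_r a^{rj}·C_r^{ik} + ∑_r a^{ir}·C_r^{jk} satisfies a^{ij}|^k = ((m−2)/K)·(a^{ik}a^j + a^{jk}a^i − 2a^i a^j a^k) = ((m−2)/((m−1)K))·(h^{ik}a^j + h^{jk}a^i). -/

import Mathlib

/-!
Since `K` is positively homogeneous of degree one, `∂K/∂p_k = a^k`, and every normalised
contraction of the symmetric form obeys `∂_k a^I = ((m - |I|)/K) (a^{Ik} - a^I a^k)`. This gives
`h^{ij} = (m-1)(a^{ij} - a^i a^j)`, `g^{ij} = (m-1) a^{ij} - (m-2) a^i a^j` and an explicit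
`C^{ijk}`, whose contraction with `p` vanishes by Euler's relation `∑_s p_s a^{Is} = K a^I`.
As moreover `a_i = p_i / K`, the rank-one part of `g_{rs}` drops out of `∑_r a^{jr} C_r^{ik}`,
which is therefore `C^{jik}/(m-1)`; the formula for `a^{ij}|^k` is then an identity between
explicit expressions.
-/

open Finset

noncomputable section

/-- `A(p) = ∑ a^{i₁…i_m} p_{i₁}⋯p_{i_m}`, where `m = M + 3 ≥ 3`. -/
def Afun {n M : ℕ} (a : (Fin (M + 3) → Fin n) → ℝ) (p : Fin n → ℝ) : ℝ :=
  ∑ ι : Fin (M + 3) → Fin n, a ι * ∏ t, p (ι t)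

/-- `K(p) = A(p)^{1/m}`. -/
def Kfun {n M : ℕ} (a : (Fin (M + 3) → Fin n) → ℝ) (p : Fin n → ℝ) : ℝ :=
  Afun a p ^ ((1 : ℝ) / (M + 3))

/-- `a^i = (∑ a^{i i₂…i_m} p_{i₂}⋯p_{i_m}) / K^{m-1}`. -/
def aU1 {n M : ℕ} (a : (Fin (M + 3) → Fin n) → ℝ) (i : Fin n) (p : Fin n → ℝ) : ℝ :=
  (∑ ι : Fin (M + 2) → Fin n, a (Fin.cons i ι) * ∏ t, p (ι t)) / Kfun a p ^ (M + 2)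

/-- `a^{ij} = (∑ a^{i j i₃…i_m} p_{i₃}⋯p_{i_m}) / K^{m-2}`. -/
def aU2 {n M : ℕ} (a : (Fin (M + 3) → Fin n) → ℝ) (i j : Fin n) (p : Fin n → ℝ) : ℝ :=
  (∑ ι : Fin (M + 1) → Fin n, a (Fin.cons i (Fin.cons j ι)) * ∏ t, p (ι t)) / Kfun a p ^ (M + 1)

/-- `a^{ijk} = (∑ a^{i j k i₄…i_m} p_{i₄}⋯p_{i_m}) / K^{m-3}`. -/
def aU3 {n M : ℕ} (a : (Fin (M + 3) → Fin n) → ℝ) (i j k : Fin n) (p : Fin n → ℝ) : ℝ :=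
  (∑ ι : Fin M → Fin n, a (Fin.cons i (Fin.cons j (Fin.cons k ι))) * ∏ t, p (ι t)) / Kfun a p ^ M

/-- Partial derivative `∂f/∂p_k` of a function of `p`. -/
def pd {n : ℕ} (f : (Fin n → ℝ) → ℝ) (k : Fin n) (p : Fin n → ℝ) : ℝ :=
  deriv (fun t => f (Function.update p k t)) (p k)

/-- Fundamental metrical d-tensor `g^{ij} = (1/2) ∂²(K²)/∂p_i∂p_j`. -/
def gU {n M : ℕ} (a : (Fin (M + 3) → Fin n) → ℝ) (i j : Fin n) (p : Fin n → ℝ) : ℝ :=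
  (1 / 2 : ℝ) * pd (fun q => pd (fun r => Kfun a r ^ 2) j q) i p

/-- Angular metrical d-tensor `h^{ij} = K ∂²K/∂p_i∂p_j`. -/
def hU {n M : ℕ} (a : (Fin (M + 3) → Fin n) → ℝ) (i j : Fin n) (p : Fin n → ℝ) : ℝ :=
  Kfun a p * pd (fun q => pd (Kfun a) j q) i p

/-- v-torsion d-tensor `C^{ijk} = -(1/2) ∂g^{ij}/∂p_k`. -/
def CU {n M : ℕ} (a : (Fin (M + 3) → Fin n) → ℝ) (i j k : Fin n) (p : Fin n → ℝ) : ℝ :=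
  -(1 / 2 : ℝ) * pd (gU a i j) k p

/-- Symmetry of `a` in all of its `m` indices. -/
def aSym {n M : ℕ} (a : (Fin (M + 3) → Fin n) → ℝ) : Prop :=
  ∀ (σ : Equiv.Perm (Fin (M + 3))) (ι : Fin (M + 3) → Fin n), a (ι ∘ σ) = a ι

/-- `a_i = ∑_s a_{is} a^s`, where `aLow` is the inverse matrix of `(a^{ij})`. -/
def aL {n M : ℕ} (a : (Fin (M + 3) → Fin n) → ℝ) (aLow : Matrix (Fin n) (Fin n) ℝ)
    (p : Fin n → ℝ) (i : Fin n) : ℝ :=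
  ∑ s, aLow i s * aU1 a s p

/-- `a_i^{jk} = ∑_s a_{is} a^{sjk}`. -/
def aL3 {n M : ℕ} (a : (Fin (M + 3) → Fin n) → ℝ) (aLow : Matrix (Fin n) (Fin n) ℝ)
    (p : Fin n → ℝ) (i j k : Fin n) : ℝ :=
  ∑ s, aLow i s * aU3 a s j k p

/-- `g_{ij} = (1/(m-1)) a_{ij} + ((m-2)/(m-1)) a_i a_j`, the inverse of `g^{ij}`. -/
def gL {n M : ℕ} (a : (Fin (M + 3) → Fin n) → ℝ) (aLow : Matrix (Fin n) (Fin n) ℝ)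
    (p : Fin n → ℝ) (i j : Fin n) : ℝ :=
  (1 / (M + 2 : ℝ)) * aLow i j + ((M + 1 : ℝ) / (M + 2)) * aL a aLow p i * aL a aLow p j

/-- v-derivation components `C_i^{jk} = ∑_s g_{is} C^{sjk}`. -/
def CL {n M : ℕ} (a : (Fin (M + 3) → Fin n) → ℝ) (aLow : Matrix (Fin n) (Fin n) ℝ)
    (p : Fin n → ℝ) (i j k : Fin n) : ℝ :=
  ∑ s, gL a aLow p i s * CU a s j k p

/-- v-curvature d-tensor `S^{hijk} = ∑_r (C_r^{ij} C^{rhk} - C_r^{ik} C^{rhj})`. -/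
def Scurv {n M : ℕ} (a : (Fin (M + 3) → Fin n) → ℝ) (aLow : Matrix (Fin n) (Fin n) ℝ)
    (p : Fin n → ℝ) (h i j k : Fin n) : ℝ :=
  ∑ r, (CL a aLow p r i j * CU a r h k p - CL a aLow p r i k * CU a r h j p)

/-- `U^{hijk} = ∑_r (a_r^{ij} a^{rhk} - a_r^{ik} a^{rhj})`. -/
def Ufun {n M : ℕ} (a : (Fin (M + 3) → Fin n) → ℝ) (aLow : Matrix (Fin n) (Fin n) ℝ)
    (p : Fin n → ℝ) (h i j k : Fin n) : ℝ :=
  ∑ r, (aL3 a aLow p r i j * aU3 a r h k p - aL3 a aLow p r i k * aU3 a r h j p)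

section TensorForm

variable {n L : ℕ}

def tensorEval (c : (Fin L → Fin n) → ℝ) (p : Fin n → ℝ) : ℝ :=
  ∑ ι : Fin L → Fin n, c ι * ∏ t, p (ι t)

def tensorContract (c : (Fin (L + 1) → Fin n) → ℝ) (i : Fin n) : (Fin L → Fin n) → ℝ :=
  fun ι => c (Fin.cons i ι)

def IsSymmTensor (c : (Fin L → Fin n) → ℝ) : Prop :=
  ∀ (σ : Equiv.Perm (Fin L)) (ι : Fin L → Fin n), c (ι ∘ σ) = c ι

theorem tensorEval_eq_sum_mul_tensorContract (c : (Fin (L + 1) → Fin n) → ℝ)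
    (p : Fin n → ℝ) :
    tensorEval c p = ∑ j, p j * tensorEval (tensorContract c j) p := by
  rw [tensorEval, ← (Fin.consEquiv fun _ => Fin n).sum_comp, Fintype.sum_prod_type]
  simp only [Fin.consEquiv_apply, Fin.prod_univ_succ, Fin.cons_zero, Fin.cons_succ, tensorEval,
    tensorContract, mul_sum]
  exact sum_congr rfl fun j _ => sum_congr rfl fun ι _ => by
    change c (Fin.cons j ι) * _ = _
    ring

theorem IsSymmTensor.contract {c : (Fin (L + 1) → Fin n) → ℝ} (hc : IsSymmTensor c)
    (i : Fin n) : IsSymmTensor (tensorContract c i) := by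
  intro σ ι
  have h : Fin.cons i (ι ∘ σ) = Fin.cons i ι ∘ Equiv.Perm.decomposeFin.symm (0, σ) := by
    funext t
    refine Fin.cases ?_ (fun s => ?_) t <;> simp [Equiv.Perm.decomposeFin_symm_apply_succ]
  simp only [tensorContract, h]
  exact hc _ _

theorem IsSymmTensor.tensorContract_comm {c : (Fin (L + 2) → Fin n) → ℝ} (hc : IsSymmTensor c)
    (i j : Fin n) :
    tensorContract (tensorContract c i) j = tensorContract (tensorContract c j) i := by
  funext ι
  simp only [tensorContract]
  rw [← hc (Equiv.swap 0 1)]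
  congr 1
  funext t
  refine Fin.cases ?_ (fun s => Fin.cases ?_ (fun u => ?_) s) t
  · simp
  · simp
  · simp [Equiv.swap_apply_of_ne_of_ne (Fin.succ_ne_zero _) (Fin.succ_succ_ne_one u)]

theorem tensorEval_fin_zero (c : (Fin 0 → Fin n) → ℝ) (p : Fin n → ℝ) :
    tensorEval c p = c Fin.elim0 := by
  simp [tensorEval, Subsingleton.elim _ (Fin.elim0 : Fin 0 → Fin n)]

theorem hasDerivAt_tensorEval_update_of_tensorContract (c : (Fin (L + 1) → Fin n) → ℝ)
    (p : Fin n → ℝ) (k : Fin n) {D : Fin n → ℝ}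
    (hD : ∀ j, HasDerivAt (fun t => tensorEval (tensorContract c j) (Function.update p k t))
      (D j) (p k)) :
    HasDerivAt (fun t => tensorEval c (Function.update p k t))
      (tensorEval (tensorContract c k) p + ∑ j, p j * D j) (p k) := by
  simp_rw [tensorEval_eq_sum_mul_tensorContract c]
  refine (HasDerivAt.fun_sum fun j _ =>
    (hasDerivAt_pi.1 (hasDerivAt_update p k (p k)) j).mul (hD j)).congr_deriv ?_
  simp [Function.update_eq_self, sum_add_distrib, Pi.single_apply]

theorem IsSymmTensor.hasDerivAt_tensorEval_update {c : (Fin (L + 1) → Fin n) → ℝ}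
    (hc : IsSymmTensor c) (p : Fin n → ℝ) (k : Fin n) :
    HasDerivAt (fun t => tensorEval c (Function.update p k t))
      ((L + 1) * tensorEval (tensorContract c k) p) (p k) := by
  induction L with
  | zero =>
    refine (hasDerivAt_tensorEval_update_of_tensorContract c p k (D := 0) fun j => ?_).congr_deriv
      (by simp)
    simp_rw [tensorEval_fin_zero]
    exact hasDerivAt_const _ _
  | succ L ih =>
    refine (hasDerivAt_tensorEval_update_of_tensorContract c p k
      fun j => ih (hc.contract j)).congr_deriv ?_
    simp_rw [hc.tensorContract_comm _ k, mul_left_comm (p _), ← mul_sum,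
      ← tensorEval_eq_sum_mul_tensorContract]
    push_cast
    ring

theorem sum_mul_tensorEval_tensorContract_div_pow (c : (Fin (L + 1) → Fin n) → ℝ)
    (p : Fin n → ℝ) {x : ℝ} (hx : x ≠ 0) :
    ∑ s, p s * (tensorEval (tensorContract c s) p / x ^ L) =
      x * (tensorEval c p / x ^ (L + 1)) := by
  rw [tensorEval_eq_sum_mul_tensorContract c]
  simp_rw [mul_div_assoc', ← sum_div]
  field_simp
  ring

theorem IsSymmTensor.hasDerivAt_tensorEval_div_pow {c : (Fin (L + 1) → Fin n) → ℝ}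
    (hc : IsSymmTensor c) {p : Fin n → ℝ} {k : Fin n} {F : (Fin n → ℝ) → ℝ} {F' : ℝ}
    (hF : HasDerivAt (fun t => F (Function.update p k t)) F' (p k)) (hF0 : F p ≠ 0) :
    HasDerivAt (fun t => tensorEval c (Function.update p k t) / F (Function.update p k t) ^ (L + 1))
      ((L + 1) / F p * (tensorEval (tensorContract c k) p / F p ^ L
        - tensorEval c p / F p ^ (L + 1) * F')) (p k) := by
  have hquot := (hc.hasDerivAt_tensorEval_update p k).fun_div (hF.fun_pow (L + 1))
    (by rw [Function.update_eq_self]; exact pow_ne_zero _ hF0)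
  simp only [Function.update_eq_self] at hquot
  refine hquot.congr_deriv ?_
  field_simp
  push_cast
  ring

end TensorForm

theorem pd_congr_of_eqOn {n : ℕ} {f g : (Fin n → ℝ) → ℝ} {U : Set (Fin n → ℝ)} (hU : IsOpen U)
    {p : Fin n → ℝ} (hp : p ∈ U) (hfg : Set.EqOn f g U) (k : Fin n) :
    pd f k p = pd g k p := by
  have hline : ContinuousAt (Function.update p k) (p k) := by fun_prop
  have hmem : Function.update p k ⁻¹' U ∈ nhds (p k) :=
    hline.preimage_mem_nhds (by rwa [Function.update_eq_self, hU.mem_nhds_iff])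
  exact Filter.EventuallyEq.deriv_eq (Filter.mem_of_superset hmem fun t ht => hfg ht)

open Matrix in
theorem Matrix.mulVec_mulVec_smul_add_vecMulVec_self {R ι : Type*} [CommRing R] [Fintype ι]
    [DecidableEq ι] {A B : Matrix ι ι R} (hAB : A * B = 1) (c d : R) {u x : ι → R}
    (hux : u ⬝ᵥ x = 0) : A *ᵥ ((c • B + d • vecMulVec u u) *ᵥ x) = c • x := by
  rw [add_mulVec, smul_mulVec, smul_mulVec, vecMulVec_mulVec, hux]
  simp [mulVec_smul, mulVec_mulVec, hAB]

section Finsler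

open Matrix

variable {n M : ℕ} {a : (Fin (M + 3) → Fin n) → ℝ} {p : Fin n → ℝ}

theorem Afun_eq_tensorEval : Afun a = tensorEval a := rfl

theorem aU1_eq_tensorEval (i : Fin n) :
    aU1 a i p = tensorEval (tensorContract a i) p / Kfun a p ^ (M + 2) := rfl

theorem aU2_eq_tensorEval (i j : Fin n) :
    aU2 a i j p = tensorEval (tensorContract (tensorContract a i) j) p / Kfun a p ^ (M + 1) := rfl

theorem aU3_eq_tensorEval (i j k : Fin n) :
    aU3 a i j k p =
      tensorEval (tensorContract (tensorContract (tensorContract a i) j) k) p / Kfun a p ^ M :=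
  rfl

theorem Kfun_pos (hp : 0 < Afun a p) : 0 < Kfun a p :=
  Real.rpow_pos_of_pos hp _

theorem Kfun_pow (hp : 0 < Afun a p) : Kfun a p ^ (M + 3) = Afun a p := by
  rw [Kfun, ← Real.rpow_natCast, ← Real.rpow_mul hp.le]
  push_cast
  rw [one_div_mul_cancel (by positivity), Real.rpow_one]

theorem isOpen_setOf_Afun_pos : IsOpen {q : Fin n → ℝ | 0 < Afun a q} :=
  isOpen_lt continuous_const (by unfold Afun; fun_prop)

theorem hasDerivAt_Kfun (hsym : aSym a) (hp : 0 < Afun a p) (k : Fin n) :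
    HasDerivAt (fun t => Kfun a (Function.update p k t)) (aU1 a k p) (p k) := by
  have h := (IsSymmTensor.hasDerivAt_tensorEval_update (c := a) hsym p k).rpow_const
    (p := 1 / (M + 3)) (Or.inl (by rw [Function.update_eq_self]; exact hp.ne'))
  rw [← Afun_eq_tensorEval, Function.update_eq_self, Real.rpow_sub hp, Real.rpow_one] at h
  refine h.congr_deriv ?_
  change _ * _ * _ * (Kfun a p / Afun a p) = _
  rw [aU1_eq_tensorEval, ← Kfun_pow hp]
  have hK := (Kfun_pos hp).ne'
  field_simp
  push_cast
  ring

theorem hasDerivAt_aU1 (hsym : aSym a) (hp : 0 < Afun a p) (i k : Fin n) :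
    HasDerivAt (fun t => aU1 a i (Function.update p k t))
      ((M + 2) / Kfun a p * (aU2 a i k p - aU1 a i p * aU1 a k p)) (p k) := by
  refine (IsSymmTensor.hasDerivAt_tensorEval_div_pow (IsSymmTensor.contract hsym i)
    (hasDerivAt_Kfun hsym hp k) (Kfun_pos hp).ne').congr_deriv ?_
  rw [aU2_eq_tensorEval, aU1_eq_tensorEval i]
  push_cast
  ring

theorem hasDerivAt_aU2 (hsym : aSym a) (hp : 0 < Afun a p) (i j k : Fin n) :
    HasDerivAt (fun t => aU2 a i j (Function.update p k t))
      ((M + 1) / Kfun a p * (aU3 a i j k p - aU2 a i j p * aU1 a k p)) (p k) := by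
  refine (IsSymmTensor.hasDerivAt_tensorEval_div_pow
    ((IsSymmTensor.contract hsym i).contract j) (hasDerivAt_Kfun hsym hp k)
    (Kfun_pos hp).ne').congr_deriv ?_
  rw [aU3_eq_tensorEval, aU2_eq_tensorEval]

theorem aU2_comm (hsym : aSym a) (i j : Fin n) : aU2 a i j p = aU2 a j i p := by
  rw [aU2_eq_tensorEval, aU2_eq_tensorEval, IsSymmTensor.tensorContract_comm (c := a) hsym]

theorem aU3_comm₁₂ (hsym : aSym a) (i j k : Fin n) : aU3 a i j k p = aU3 a j i k p := by
  rw [aU3_eq_tensorEval, aU3_eq_tensorEval, IsSymmTensor.tensorContract_comm (c := a) hsym]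

theorem aU3_comm₂₃ (hsym : aSym a) (i j k : Fin n) : aU3 a i j k p = aU3 a i k j p := by
  rw [aU3_eq_tensorEval, aU3_eq_tensorEval,
    IsSymmTensor.tensorContract_comm (IsSymmTensor.contract hsym i)]

theorem sum_mul_aU1 (hp : 0 < Afun a p) : ∑ s, p s * aU1 a s p = Kfun a p := by
  have hK := (Kfun_pos hp).ne'
  calc ∑ s, p s * aU1 a s p = Kfun a p * (tensorEval a p / Kfun a p ^ (M + 3)) :=
        sum_mul_tensorEval_tensorContract_div_pow a p hK
    _ = Kfun a p := by rw [← Afun_eq_tensorEval, ← Kfun_pow hp]; field_simp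

theorem sum_mul_aU2 (hp : 0 < Afun a p) (i : Fin n) :
    ∑ s, p s * aU2 a i s p = Kfun a p * aU1 a i p :=
  sum_mul_tensorEval_tensorContract_div_pow (tensorContract a i) p (Kfun_pos hp).ne'

theorem sum_mul_aU3 (hp : 0 < Afun a p) (i j : Fin n) :
    ∑ s, p s * aU3 a i j s p = Kfun a p * aU2 a i j p :=
  sum_mul_tensorEval_tensorContract_div_pow (tensorContract (tensorContract a i) j) p
    (Kfun_pos hp).ne'

theorem pd_Kfun (hsym : aSym a) (hp : 0 < Afun a p) (k : Fin n) : pd (Kfun a) k p = aU1 a k p :=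
  (hasDerivAt_Kfun hsym hp k).deriv

theorem pd_aU1 (hsym : aSym a) (hp : 0 < Afun a p) (i k : Fin n) :
    pd (aU1 a i) k p = (M + 2) / Kfun a p * (aU2 a i k p - aU1 a i p * aU1 a k p) :=
  (hasDerivAt_aU1 hsym hp i k).deriv

theorem pd_aU2 (hsym : aSym a) (hp : 0 < Afun a p) (i j k : Fin n) :
    pd (aU2 a i j) k p = (M + 1) / Kfun a p * (aU3 a i j k p - aU2 a i j p * aU1 a k p) :=
  (hasDerivAt_aU2 hsym hp i j k).deriv

theorem hU_eq (hsym : aSym a) (hp : 0 < Afun a p) (i j : Fin n) :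
    hU a i j p = (M + 2) * (aU2 a i j p - aU1 a i p * aU1 a j p) := by
  have hK := (Kfun_pos hp).ne'
  rw [hU, pd_congr_of_eqOn isOpen_setOf_Afun_pos hp (fun q hq => pd_Kfun hsym hq j) i,
    pd_aU1 hsym hp j i, aU2_comm hsym j i]
  field_simp

theorem gU_eq (hsym : aSym a) (hp : 0 < Afun a p) (i j : Fin n) :
    gU a i j p = (M + 2) * aU2 a i j p - (M + 1) * (aU1 a i p * aU1 a j p) := by
  have hsq : Set.EqOn (pd (fun r => Kfun a r ^ 2) j) (fun q => 2 * (Kfun a q * aU1 a j q))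
      {q | 0 < Afun a q} := fun q hq => by
    have h := (hasDerivAt_Kfun hsym hq j).fun_pow 2
    rw [Function.update_eq_self] at h
    rw [pd, h.deriv]
    ring
  have hder := (((hasDerivAt_Kfun hsym hp i).fun_mul (hasDerivAt_aU1 hsym hp j i)).const_mul 2)
  rw [Function.update_eq_self] at hder
  have hK := (Kfun_pos hp).ne'
  rw [gU, pd_congr_of_eqOn isOpen_setOf_Afun_pos hp hsq i, pd, hder.deriv, aU2_comm hsym j i]
  field_simp
  ring

theorem CU_eq (hsym : aSym a) (hp : 0 < Afun a p) (i j k : Fin n) :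
    CU a i j k p = -((M + 1) * (M + 2) / (2 * Kfun a p)) *
      (aU3 a i j k p - aU2 a i j p * aU1 a k p - aU2 a i k p * aU1 a j p
        - aU2 a j k p * aU1 a i p + 2 * (aU1 a i p * aU1 a j p * aU1 a k p)) := by
  have hder := ((hasDerivAt_aU2 hsym hp i j k).const_mul (M + 2 : ℝ)).fun_sub
    (((hasDerivAt_aU1 hsym hp i k).fun_mul (hasDerivAt_aU1 hsym hp j k)).const_mul (M + 1 : ℝ))
  rw [Function.update_eq_self] at hder
  have hK := (Kfun_pos hp).ne'
  rw [CU, pd_congr_of_eqOn isOpen_setOf_Afun_pos hp (fun q hq => gU_eq hsym hq i j) k, pd,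
    hder.deriv]
  field_simp
  ring

theorem sum_mul_CU (hsym : aSym a) (hp : 0 < Afun a p) (i k : Fin n) :
    ∑ s, p s * CU a s i k p = 0 := by
  calc ∑ s, p s * CU a s i k p
      = -((M + 1) * (M + 2) / (2 * Kfun a p)) *
          (∑ s, p s * aU3 a i k s p - (∑ s, p s * aU2 a i s p) * aU1 a k p
            - (∑ s, p s * aU2 a k s p) * aU1 a i p - aU2 a i k p * ∑ s, p s * aU1 a s p
            + 2 * (∑ s, p s * aU1 a s p) * aU1 a i p * aU1 a k p) := by
        simp only [mul_sum, sum_mul, ← sum_sub_distrib, ← sum_add_distrib]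
        refine sum_congr rfl fun s _ => ?_
        rw [CU_eq hsym hp, aU3_comm₁₂ hsym s, aU3_comm₂₃ hsym i s, aU2_comm hsym s,
          aU2_comm hsym s k]
        ring
    _ = 0 := by
        rw [sum_mul_aU3 hp, sum_mul_aU2 hp, sum_mul_aU2 hp, sum_mul_aU1 hp]
        ring

theorem aL_eq (hp : 0 < Afun a p) {aLow : Matrix (Fin n) (Fin n) ℝ}
    (hInv : aLow * Matrix.of (fun i j => aU2 a i j p) = 1) :
    aL a aLow p = (Kfun a p)⁻¹ • p := by
  have hK := (Kfun_pos hp).ne'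
  have haU1 :
      (fun s => aU1 a s p) = (Kfun a p)⁻¹ • (Matrix.of (fun i j => aU2 a i j p) *ᵥ p) := by
    funext s
    simp only [Pi.smul_apply, smul_eq_mul, mulVec, dotProduct, of_apply]
    simp_rw [mul_comm (aU2 a s _ p), sum_mul_aU2 hp]
    field_simp
  change aLow *ᵥ (fun s => aU1 a s p) = _
  rw [haU1, mulVec_smul, mulVec_mulVec, hInv, one_mulVec]

theorem sum_aU2_mul_CL (hsym : aSym a) (hp : 0 < Afun a p) {aLow : Matrix (Fin n) (Fin n) ℝ}
    (hInv₁ : Matrix.of (fun i j => aU2 a i j p) * aLow = 1)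
    (hInv₂ : aLow * Matrix.of (fun i j => aU2 a i j p) = 1) (i j k : Fin n) :
    ∑ r, aU2 a i r p * CL a aLow p r j k = CU a i j k p / (M + 2) := by
  have hg : Matrix.of (gL a aLow p) = (1 / (M + 2) : ℝ) • aLow
      + ((M + 1) / (M + 2) : ℝ) • Matrix.vecMulVec (aL a aLow p) (aL a aLow p) := by
    ext r s
    simp [gL, vecMulVec_apply, mul_assoc]
  have horth : aL a aLow p ⬝ᵥ (fun s => CU a s j k p) = 0 := by
    rw [aL_eq hp hInv₂, smul_dotProduct, dotProduct, sum_mul_CU hsym hp, smul_zero]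
  have h := congrFun (mulVec_mulVec_smul_add_vecMulVec_self hInv₁ (1 / (M + 2) : ℝ)
    ((M + 1) / (M + 2) : ℝ) horth) i
  rw [← hg] at h
  simpa [mulVec, dotProduct, CL, div_eq_inv_mul] using h

end Finsler

theorem stmt_12_general {n M : ℕ} (a : (Fin (M + 3) → Fin n) → ℝ)
    (hsym : aSym a) (p : Fin n → ℝ) (hA : 0 < Afun a p)
    (aLow : Matrix (Fin n) (Fin n) ℝ)
    (hInv₁ : (Matrix.of fun i j => aU2 a i j p) * aLow = 1)
    (hInv₂ : aLow * (Matrix.of fun i j => aU2 a i j p) = 1) :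
    ∀ i j k : Fin n,
      pd (aU2 a i j) k p + (∑ r, aU2 a r j p * CL a aLow p r i k) +
          (∑ r, aU2 a i r p * CL a aLow p r j k) =
        ((M + 1 : ℝ) / Kfun a p) *
          (aU2 a i k p * aU1 a j p + aU2 a j k p * aU1 a i p -
            2 * (aU1 a i p * aU1 a j p * aU1 a k p)) ∧
      pd (aU2 a i j) k p + (∑ r, aU2 a r j p * CL a aLow p r i k) +
          (∑ r, aU2 a i r p * CL a aLow p r j k) =
        ((M + 1 : ℝ) / ((M + 2 : ℝ) * Kfun a p)) *
          (hU a i k p * aU1 a j p + hU a j k p * aU1 a i p) := by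
  intro i j k
  have hK := (Kfun_pos hA).ne'
  have hsum : ∑ r, aU2 a r j p * CL a aLow p r i k = CU a j i k p / (M + 2) := by
    simp_rw [aU2_comm hsym _ j]
    exact sum_aU2_mul_CL hsym hA hInv₁ hInv₂ j i k
  have hcov : pd (aU2 a i j) k p + (∑ r, aU2 a r j p * CL a aLow p r i k) +
      (∑ r, aU2 a i r p * CL a aLow p r j k) = ((M + 1 : ℝ) / Kfun a p) *
        (aU2 a i k p * aU1 a j p + aU2 a j k p * aU1 a i p -
          2 * (aU1 a i p * aU1 a j p * aU1 a k p)) := by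
    rw [hsum, sum_aU2_mul_CL hsym hA hInv₁ hInv₂, pd_aU2 hsym hA, CU_eq hsym hA, CU_eq hsym hA,
      aU3_comm₁₂ hsym j, aU2_comm hsym j i]
    field_simp
    ring
  refine ⟨hcov, ?_⟩
  rw [hcov, hU_eq hsym hA, hU_eq hsym hA]
  field_simp
  ring

/-- the v-covariant derivative
`a^{ij}|^k = ∂a^{ij}/∂p_k + ∑_r a^{rj} C_r^{ik} + ∑_r a^{ir} C_r^{jk}` satisfies
`a^{ij}|^k = ((m-2)/K)(a^{ik}a^j + a^{jk}a^i - 2a^i a^j a^k)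
= ((m-2)/((m-1)K))(h^{ik}a^j + h^{jk}a^i)`, where `m = M + 3`. -/
theorem stmt_12 {n M : ℕ} (hn : 4 ≤ n) (a : (Fin (M + 3) → Fin n) → ℝ)
    (hsym : aSym a) (p : Fin n → ℝ) (hA : 0 < Afun a p)
    (aLow : Matrix (Fin n) (Fin n) ℝ)
    (hInv₁ : (Matrix.of fun i j => aU2 a i j p) * aLow = 1)
    (hInv₂ : aLow * (Matrix.of fun i j => aU2 a i j p) = 1) :
    ∀ i j k : Fin n,
      pd (aU2 a i j) k p + (∑ r, aU2 a r j p * CL a aLow p r i k) +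
          (∑ r, aU2 a i r p * CL a aLow p r j k) =
        ((M + 1 : ℝ) / Kfun a p) *
          (aU2 a i k p * aU1 a j p + aU2 a j k p * aU1 a i p -
            2 * (aU1 a i p * aU1 a j p * aU1 a k p)) ∧
      pd (aU2 a i j) k p + (∑ r, aU2 a r j p * CL a aLow p r i k) +
          (∑ r, aU2 a i r p * CL a aLow p r j k) =
        ((M + 1 : ℝ) / ((M + 2 : ℝ) * Kfun a p)) *
          (hU a i k p * aU1 a j p + hU a j k p * aU1 a i p) :=
  stmt_12_general a hsym p hA aLow hInv₁ hInv₂
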